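/- Let a ∈ A. For n ∈ ℕ set i_n := i if n is odd and i_n := j if n is even, and set j_n := j if n is odd and j_n := i if n is even; for m ∈ ℕ₀ set a_m := i_m ⋯ i_1 ▷ a and b_m := j_m ⋯ j_1 ▷ a. Suppose R_a is infinite. Then (R^{re}_a)⁺ = { w_m(α_{i_{m+1},a_m}) : m ∈ ℕ₀ } ∪ { u_m(α_{j_{m+1},b_m}) : m ∈ ℕ₀ }, where w_m is the σ-composite of the word (i_1, …, i_m) at a_m and u_m is the σ-composite of the word (j_1, …, j_m) at b_m; moreover all the elements w_m(α_{i_{m+1},a_m}) (m ∈ ℕ₀) and u_m(α_{j_{m+1},b_m}) (m ∈ ℕ₀) are pairwise distinct. -/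

import Mathlib

open Pointwise

variable {N : Type*} {A : Type*}

/-- The element `(i j)^m ▷ a` for the action of `F₂(N)` on `A`. -/
def altIter (act : N → A → A) (i j : N) (a : A) : ℕ → A
  | 0 => a
  | m + 1 => act i (act j (altIter act i j a m))

/-- The set `Θ(i,j;a)`. -/
def ThetaSet (act : N → A → A) (i j : N) (a : A) : Set A :=
  {x | ∃ m : ℕ, x = altIter act i j a m ∨ x = altIter act j i a m}

/-- The set of `ℕ₀`-linear combinations of elements of `s`. -/
def NSpan (s : Set (N →₀ ℝ)) : Set (N →₀ ℝ) :=
  (AddSubmonoid.closure s : Set (N →₀ ℝ))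

/-- A generalized root system: a transitive action of `F₂(N)` on `A` (axiom (1)),
roots `root a ⊆ ℝ^{(N)}` with simple roots `α n a` forming a basis (axiom (2)),
and maps `σ i a ∈ GL(ℝ^{(N)})`, satisfying axioms (3)-(7). -/
structure GRS (N : Type*) (A : Type*) where
  act : N → A → A
  act_invol : ∀ n a, act n (act n a) = a
  act_trans : ∀ a b : A, ∃ l : List N, l.foldr act a = b
  root : A → Set (N →₀ ℝ)
  α : N → A → N →₀ ℝ
  α_mem : ∀ n a, α n a ∈ root a
  α_indep : ∀ a, LinearIndependent ℝ fun n => α n a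
  α_span : ∀ a, Submodule.span ℝ (Set.range fun n => α n a) = ⊤
  σ : N → A → (N →₀ ℝ) ≃ₗ[ℝ] (N →₀ ℝ)
  ax3 : ∀ a, root a =
    root a ∩ NSpan (Set.range fun n => α n a) ∪ -(root a ∩ NSpan (Set.range fun n => α n a))
  ax4 : ∀ i a, (Set.range fun r : ℝ => r • α i a) ∩ root a = {α i a, -α i a}
  ax5_root : ∀ i a, ⇑(σ i a) '' root a = root (act i a)
  ax5_diag : ∀ i a, σ i a (α i a) = -α i (act i a)
  ax5_off : ∀ i a j, j ≠ i →
    ∃ m : ℕ, σ i a (α j a) = α j (act i a) + (m : ℝ) • α i (act i a)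
  ax6 : ∀ i a v, σ i (act i a) (σ i a v) = v
  ax7 : ∀ a (i j : N), i ≠ j →
    (root a ∩ {β | ∃ p q : ℕ, β = (p : ℝ) • α i a + (q : ℝ) • α j a}).Finite →
    (ThetaSet act i j a).Finite ∧
      (ThetaSet act i j a).ncard ∣
        (root a ∩ {β | ∃ p q : ℕ, β = (p : ℝ) • α i a + (q : ℝ) • α j a}).ncard

/-- The positive roots `R⁺_a`. -/
def GRS.pos (G : GRS N A) (a : A) : Set (N →₀ ℝ) :=
  G.root a ∩ NSpan (Set.range fun n => G.α n a)

/-- The target `i₁ ⋯ i_m ▷ a` of the word `(i₁, …, i_m)` at `a`. -/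
def GRS.target (G : GRS N A) (l : List N) (a : A) : A :=
  l.foldr G.act a

/-- The σ-composite `σ_{i₁,b₁} ∘ ⋯ ∘ σ_{i_m,b_m}` of the word `(i₁, …, i_m)` at `a`. -/
noncomputable def GRS.wmap (G : GRS N A) : List N → A → (N →₀ ℝ) ≃ₗ[ℝ] (N →₀ ℝ)
  | [], _ => LinearEquiv.refl ℝ _
  | i :: l, a => (G.wmap l a).trans (G.σ i (G.target l a))

/-- The length `ℓ` of a word at `a`: the minimal length of a word at `a`
with the same target and the same σ-composite. -/
noncomputable def GRS.len (G : GRS N A) (l : List N) (a : A) : ℕ :=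
  sInf {m | ∃ l' : List N, l'.length = m ∧
    G.target l' a = G.target l a ∧ G.wmap l' a = G.wmap l a}

/-- A word of length `m` at `a` is reduced if `ℓ = m`. -/
def GRS.Reduced (G : GRS N A) (l : List N) (a : A) : Prop :=
  G.len l a = l.length

/-- `m_{i,j;a} = |R_a ∩ (ℕ₀ α_{i,a} + ℕ₀ α_{j,a})|`. -/
noncomputable def GRS.mij (G : GRS N A) (i j : N) (a : A) : ℕ :=
  (G.root a ∩ {β | ∃ p q : ℕ, β = (p : ℝ) • G.α i a + (q : ℝ) • G.α j a}).ncard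

/-- The alternating word `(i₁, …, i_m)` with `i_k = i` for `k` odd (leftmost letter `i`). -/
def altList (i j : N) : ℕ → List N
  | 0 => []
  | m + 1 => i :: altList j i m

/-- The alternating word of length `m` in the letters `i,j` whose rightmost letter is `i`. -/
def altR (i j : N) : ℕ → List N
  | 0 => []
  | m + 1 => altR j i m ++ [i]

/-- `a_m = i_m ⋯ i_1 ▷ a` for the alternating sequence with `i_k = i` for odd `k`. -/
def aIter (act : N → A → A) (i j : N) (a : A) : ℕ → A
  | 0 => a
  | m + 1 => act (if m % 2 = 0 then i else j) (aIter act i j a m)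

/-- The set of real roots `R^{re}_a`. -/
def GRS.reroot (G : GRS N A) (a : A) : Set (N →₀ ℝ) :=
  {β | ∃ (b : A) (l : List N) (n : N), G.target l b = a ∧ β = G.wmap l b (G.α n b)}

/-- The word `C(i,j;a)`: alternating of length `m_{i,j;a} - 1` with leftmost letter `i`. -/
noncomputable def GRS.Cword (G : GRS N A) (i j : N) (a : A) : List N :=
  altList i j (G.mij i j a - 1)

/-! In rank two, `σ_x` sends every positive root other than `α_x` to a positive root. Hence a
positive σ-composite of a simple root stays positive when its first reflection is stripped off,
and by induction on the word it lies in one of the two alternating sequences, which are closed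
under this stripping.

The alternating sequences consist of positive roots because they never return to a simple root,
and this is where the infinitude of the roots enters. If `altRoot k l b (m + 1)` were `α_l`, the
alternating word `W` of length `m + 1` would send `α_x` to `α_l` and the other simple root `α_y`
to `-altRoot k l b m`, whose `α_k`-coordinate is positive. A positive root at the far end of `W`
either stays positive along `W`, which forces its `α_y`-coordinate to vanish and so makes it
`α_x`, or is one of the `m + 1` inversion roots of `W`; so there would be only finitely many
roots there. Pairwise distinctness then follows by peeling off the first reflection. -/

theorem ite_mod_two_succ {α : Type*} (x y : α) (m : ℕ) :
    (if (m + 1) % 2 = 0 then x else y) = if m % 2 = 0 then y else x := by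
  split_ifs <;> first | rfl | omega

theorem altList_succ (k l : N) (m : ℕ) : altList k l (m + 1) = k :: altList l k m := rfl

theorem aIter_succ' (act : N → A → A) (k l : N) (a : A) (m : ℕ) :
    aIter act k l a (m + 1) = aIter act l k (act k a) m := by
  induction m with
  | zero => rfl
  | succ m ih =>
    show act _ (aIter act k l a (m + 1)) = act _ (aIter act l k (act k a) m)
    rw [ih, ite_mod_two_succ]

namespace GRS

variable (G : GRS N A) {b c : A} {i k l : N} {β : N →₀ ℝ}

noncomputable def basis (b : A) : Module.Basis N ℝ (N →₀ ℝ) :=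
  Module.Basis.mk (G.α_indep b) (G.α_span b).ge

@[simp]
theorem basis_apply (b : A) (n : N) : G.basis b n = G.α n b :=
  Module.Basis.mk_apply _ _ _

@[simp]
theorem repr_α (b : A) (n : N) : (G.basis b).repr (G.α n b) = Finsupp.single n 1 := by
  rw [← G.basis_apply, Module.Basis.repr_self]

theorem α_ne (hkl : k ≠ l) (b : A) : G.α k b ≠ G.α l b :=
  (G.α_indep b).injective.ne hkl

theorem α_mem_pos (n : N) (b : A) : G.α n b ∈ G.pos b :=
  ⟨G.α_mem n b, AddSubmonoid.subset_closure ⟨n, rfl⟩⟩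

theorem repr_nonneg_of_mem_nspan (hβ : β ∈ NSpan (Set.range fun n => G.α n b)) (n : N) :
    0 ≤ (G.basis b).repr β n := by
  induction hβ using AddSubmonoid.closure_induction with
  | mem x hx =>
    obtain ⟨m, rfl⟩ := hx
    rcases eq_or_ne m n with rfl | hmn <;> simp [*]
  | zero => simp
  | add x y _ _ hx hy =>
    rw [map_add, Finsupp.add_apply]
    exact add_nonneg hx hy

theorem neg_α_not_mem_pos (i : N) (b : A) : -G.α i b ∉ G.pos b := fun h => by
  have := G.repr_nonneg_of_mem_nspan h.2 i
  norm_num at this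

theorem mem_pos_or_neg_mem_pos (hβ : β ∈ G.root b) : β ∈ G.pos b ∨ -β ∈ G.pos b := by
  rw [G.ax3 b] at hβ
  exact hβ

theorem pos_infinite (h : (G.root b).Infinite) : (G.pos b).Infinite := fun hfin =>
  h (by rw [G.ax3 b]; exact hfin.union hfin.neg)

theorem eq_α_of_mem_pos (hβ : β ∈ G.pos b) (h : ∀ n, n ≠ i → (G.basis b).repr β n = 0) :
    β = G.α i b := by
  have hline : β = (G.basis b).repr β i • G.α i b := (G.basis b).ext_elem fun n => by
    by_cases hn : n = i
    · subst hn
      simp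
    · simp [h n hn, Ne.symm hn]
  have hmem : β ∈ (Set.range fun r : ℝ => r • G.α i b) ∩ G.root b := ⟨⟨_, hline.symm⟩, hβ.1⟩
  rw [G.ax4] at hmem
  rcases hmem with h | h
  · exact h
  · exact absurd (h ▸ hβ) (G.neg_α_not_mem_pos i b)

theorem exists_repr_pos_of_ne (hβ : β ∈ G.pos b) (hne : β ≠ G.α i b) :
    ∃ n, n ≠ i ∧ 0 < (G.basis b).repr β n := by
  by_contra! h
  exact hne (G.eq_α_of_mem_pos hβ fun n hn =>
    le_antisymm (h n hn) (G.repr_nonneg_of_mem_nspan hβ.2 n))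

theorem repr_σ_of_ne {n : N} (hn : n ≠ i) (b : A) (v : N →₀ ℝ) :
    (G.basis (G.act i b)).repr (G.σ i b v) n = (G.basis b).repr v n := by
  have key : Finsupp.lapply n ∘ₗ ((G.basis (G.act i b)).repr : (N →₀ ℝ) →ₗ[ℝ] N →₀ ℝ) ∘ₗ
      (G.σ i b : (N →₀ ℝ) →ₗ[ℝ] N →₀ ℝ) = Finsupp.lapply n ∘ₗ (G.basis b).repr := by
    refine (G.basis b).ext fun m => ?_
    by_cases hm : m = i
    · subst hm
      simp [G.ax5_diag, Ne.symm hn]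
    · obtain ⟨c, hc⟩ := G.ax5_off i b m hm
      simp [hc, Ne.symm hn]
  exact LinearMap.congr_fun key v

theorem σ_mem_pos (hβ : β ∈ G.pos b) (hne : β ≠ G.α i b) : G.σ i b β ∈ G.pos (G.act i b) := by
  obtain ⟨n, hn, hpos⟩ := G.exists_repr_pos_of_ne hβ hne
  have hroot : G.σ i b β ∈ G.root (G.act i b) := G.ax5_root i b ▸ Set.mem_image_of_mem _ hβ.1
  refine (G.mem_pos_or_neg_mem_pos hroot).resolve_right fun hneg => ?_
  have := G.repr_nonneg_of_mem_nspan hneg.2 n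
  rw [map_neg, Finsupp.neg_apply, G.repr_σ_of_ne hn] at this
  linarith

theorem σ_σ_act (i : N) (b : A) (v : N →₀ ℝ) : G.σ i b (G.σ i (G.act i b) v) = v := by
  simpa only [G.act_invol] using G.ax6 i (G.act i b) v

theorem wmap_cons (x : N) (w : List N) (c : A) (v : N →₀ ℝ) :
    G.wmap (x :: w) c v = G.σ x (G.target w c) (G.wmap w c v) := rfl

theorem target_cons (x : N) (w : List N) (c : A) :
    G.target (x :: w) c = G.act x (G.target w c) := rfl

theorem image_wmap_root (w : List N) (c : A) :
    ⇑(G.wmap w c) '' G.root c = G.root (G.target w c) := by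
  induction w with
  | nil => exact Set.image_id _
  | cons x w ih =>
    rw [target_cons, ← G.ax5_root, ← ih, ← Set.image_comp]
    rfl

theorem wmap_mem_root (w : List N) (hβ : β ∈ G.root c) : G.wmap w c β ∈ G.root (G.target w c) :=
  G.image_wmap_root w c ▸ Set.mem_image_of_mem _ hβ

theorem root_infinite {a : A} (h : (G.root a).Infinite) (b : A) : (G.root b).Infinite := by
  obtain ⟨w, rfl⟩ := G.act_trans a b
  rw [show List.foldr G.act a w = G.target w a from rfl, ← G.image_wmap_root]
  exact h.image (G.wmap w a).injective.injOn

noncomputable def inversions : List N → A → List (N →₀ ℝ)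
  | [], _ => []
  | x :: w, c => (G.wmap w c).symm (G.α x (G.target w c)) :: inversions w c

theorem wmap_mem_pos_or_mem_inversions (w : List N) (hβ : β ∈ G.pos c) :
    G.wmap w c β ∈ G.pos (G.target w c) ∨ β ∈ G.inversions w c := by
  induction w with
  | nil => exact Or.inl hβ
  | cons x w ih =>
    rcases ih with h | h
    · by_cases hx : G.wmap w c β = G.α x (G.target w c)
      · refine Or.inr (List.mem_cons.2 (Or.inl ?_))
        rw [← hx, LinearEquiv.symm_apply_apply]
      · exact Or.inl (G.σ_mem_pos h hx)
    · exact Or.inr (List.mem_cons_of_mem _ h)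

theorem target_altList_aIter (k l : N) (b : A) (m : ℕ) :
    G.target (altList k l m) (aIter G.act k l b m) = b := by
  induction m generalizing k l b with
  | zero => rfl
  | succ m ih => rw [aIter_succ', altList_succ, target_cons, ih, G.act_invol]

theorem wmap_altList_succ (k l : N) (b : A) (m : ℕ) (v : N →₀ ℝ) :
    G.wmap (altList k l (m + 1)) (aIter G.act k l b (m + 1)) v =
      G.σ k (G.act k b) (G.wmap (altList l k m) (aIter G.act l k (G.act k b) m) v) := by
  rw [aIter_succ', altList_succ, wmap_cons, target_altList_aIter]

/-- The `m`-th root `w_m(α_{i_{m+1}, a_m})` of the alternating sequence at `b` whose word begins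
with the letter `k`. -/
noncomputable def altRoot (k l : N) (b : A) (m : ℕ) : N →₀ ℝ :=
  G.wmap (altList k l m) (aIter G.act k l b m)
    (G.α (if m % 2 = 0 then k else l) (aIter G.act k l b m))

theorem altRoot_succ (k l : N) (b : A) (m : ℕ) :
    G.altRoot k l b (m + 1) = G.σ k (G.act k b) (G.altRoot l k (G.act k b) m) := by
  rw [altRoot, wmap_altList_succ, aIter_succ' G.act k l b m, ite_mod_two_succ]
  rfl

theorem σ_altRoot_succ (k l : N) (b : A) (m : ℕ) :
    G.σ k b (G.altRoot k l b (m + 1)) = G.altRoot l k (G.act k b) m := by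
  rw [altRoot_succ, σ_σ_act]

theorem altRoot_succ_act (k l : N) (b : A) (m : ℕ) :
    G.altRoot k l (G.act k b) (m + 1) = G.σ k b (G.altRoot l k b m) := by
  rw [altRoot_succ, G.act_invol]

theorem wmap_altList_succ_α_last (k l : N) (b : A) (m : ℕ) :
    G.wmap (altList k l (m + 1)) (aIter G.act k l b (m + 1))
      (G.α (if m % 2 = 0 then k else l) (aIter G.act k l b (m + 1))) = -G.altRoot k l b m := by
  induction m generalizing k l b with
  | zero =>
    rw [wmap_altList_succ]
    show G.σ k (G.act k b) (G.α k (G.act k b)) = -G.α k b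
    rw [G.ax5_diag, G.act_invol]
  | succ m ih =>
    rw [wmap_altList_succ, aIter_succ' G.act k l b (m + 1), ite_mod_two_succ k l m, ih, map_neg,
      altRoot_succ]

theorem eq_repr_smul_add_repr_smul (hkl : k ≠ l) (hN : ∀ n, n = k ∨ n = l) (b : A)
    (v : N →₀ ℝ) :
    v = (G.basis b).repr v k • G.α k b + (G.basis b).repr v l • G.α l b :=
  (G.basis b).ext_elem fun n => by
    rcases hN n with rfl | rfl <;> simp [hkl, hkl.symm]

theorem altRoot_succ_ne_α (hkl : k ≠ l) (hN : ∀ n, n = k ∨ n = l) (m : ℕ)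
    (hinf : (G.root (aIter G.act k l b (m + 1))).Infinite)
    (hpos : G.altRoot k l b m ∈ G.pos b) (hne : G.altRoot k l b m ≠ G.α l b) :
    G.altRoot k l b (m + 1) ≠ G.α l b := by
  intro hdeg
  obtain ⟨n, hnl, hn⟩ := G.exists_repr_pos_of_ne hpos hne
  have hk : 0 < (G.basis b).repr (G.altRoot k l b m) k := (hN n).resolve_right hnl ▸ hn
  set c := aIter G.act k l b (m + 1)
  set W := G.wmap (altList k l (m + 1)) c
  set x := if m % 2 = 0 then l else k
  set y := if m % 2 = 0 then k else l
  have hxy : x ≠ y := by by_cases h : m % 2 = 0 <;> simp [x, y, h, hkl, hkl.symm]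
  have hNxy : ∀ n, n = x ∨ n = y := by
    by_cases h : m % 2 = 0 <;> simp [x, y, h, hN, (hN _).symm]
  have hWx : W (G.α x c) = G.α l b := by rw [← hdeg, altRoot, ite_mod_two_succ]
  have hWy : W (G.α y c) = -G.altRoot k l b m := G.wmap_altList_succ_α_last k l b m
  have hsub : G.pos c ⊆ {β | β ∈ G.inversions (altList k l (m + 1)) c} ∪ {G.α x c} := by
    intro β hβ
    refine (G.wmap_mem_pos_or_mem_inversions _ hβ).symm.imp id fun hWβ => ?_
    rw [G.target_altList_aIter] at hWβ
    have hWβk : (G.basis b).repr (W β) k =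
        -((G.basis c).repr β y * (G.basis b).repr (G.altRoot k l b m) k) := by
      conv_lhs => rw [G.eq_repr_smul_add_repr_smul hxy hNxy c β]
      simp [hWx, hWy, hkl]
    have hy : (G.basis c).repr β y = 0 := by
      nlinarith [G.repr_nonneg_of_mem_nspan hWβ.2 k, G.repr_nonneg_of_mem_nspan hβ.2 y]
    exact G.eq_α_of_mem_pos hβ fun n hn => ((hNxy n).resolve_left hn) ▸ hy
  exact G.pos_infinite hinf
    (((G.inversions _ c).finite_toSet.union (Set.finite_singleton _)).subset hsub)

theorem altRoot_mem_pos_and_ne_α (hinf : ∀ b, (G.root b).Infinite) (hkl : k ≠ l)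
    (hN : ∀ n, n = k ∨ n = l) (b : A) (m : ℕ) :
    G.altRoot k l b m ∈ G.pos b ∧ G.altRoot k l b m ≠ G.α l b := by
  induction m generalizing k l b with
  | zero => exact ⟨G.α_mem_pos k b, G.α_ne hkl b⟩
  | succ m ih =>
    obtain ⟨hpos, hne⟩ := ih hkl hN b
    obtain ⟨hpos', hne'⟩ := ih hkl.symm (fun n => (hN n).symm) (G.act k b)
    refine ⟨?_, G.altRoot_succ_ne_α hkl hN m (hinf _) hpos hne⟩
    rw [altRoot_succ]
    simpa only [G.act_invol] using G.σ_mem_pos hpos' hne'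

theorem altRoot_succ_ne_α_self (hinf : ∀ b, (G.root b).Infinite) (hkl : k ≠ l)
    (hN : ∀ n, n = k ∨ n = l) (b : A) (m : ℕ) : G.altRoot k l b (m + 1) ≠ G.α k b := fun h => by
  have hσ := congrArg (G.σ k b) h
  rw [σ_altRoot_succ, G.ax5_diag] at hσ
  exact G.neg_α_not_mem_pos k (G.act k b)
    (hσ ▸ (G.altRoot_mem_pos_and_ne_α hinf hkl.symm (fun n => (hN n).symm) (G.act k b) m).1)

theorem altRoot_injective (hinf : ∀ b, (G.root b).Infinite) (hkl : k ≠ l)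
    (hN : ∀ n, n = k ∨ n = l) (b : A) : Function.Injective (G.altRoot k l b) := by
  intro m m' h
  induction m generalizing m' k l b with
  | zero =>
    cases m' with
    | zero => rfl
    | succ m' => exact absurd h.symm (G.altRoot_succ_ne_α_self hinf hkl hN b m')
  | succ m ih =>
    cases m' with
    | zero => exact absurd h (G.altRoot_succ_ne_α_self hinf hkl hN b m)
    | succ m' =>
      have hσ := congrArg (G.σ k b) h
      rw [σ_altRoot_succ, σ_altRoot_succ] at hσ
      rw [ih hkl.symm (fun n => (hN n).symm) (G.act k b) hσ]

theorem altRoot_ne_altRoot_swap (hinf : ∀ b, (G.root b).Infinite) (hkl : k ≠ l)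
    (hN : ∀ n, n = k ∨ n = l) (b : A) (m m' : ℕ) : G.altRoot k l b m ≠ G.altRoot l k b m' := by
  induction m' generalizing m k l b with
  | zero => exact (G.altRoot_mem_pos_and_ne_α hinf hkl hN b m).2
  | succ m' ih =>
    intro h
    have hσ := congrArg (G.σ l b) h
    rw [← altRoot_succ_act, σ_altRoot_succ] at hσ
    exact ih hkl.symm (fun n => (hN n).symm) (G.act l b) (m + 1) hσ

theorem σ_mem_altRoots
    (hβ : β ∈ G.pos b → β ∈ Set.range (G.altRoot k l b) ∪ Set.range (G.altRoot l k b))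
    (hσ : G.σ k b β ∈ G.pos (G.act k b)) :
    G.σ k b β ∈ Set.range (G.altRoot k l (G.act k b)) ∪ Set.range (G.altRoot l k (G.act k b)) := by
  by_cases hα : G.σ k b β = G.α k (G.act k b)
  · exact Or.inl ⟨0, hα.symm⟩
  have hβpos : β ∈ G.pos b := by simpa only [G.ax6, G.act_invol] using G.σ_mem_pos hσ hα
  rcases hβ hβpos with ⟨_ | m, rfl⟩ | ⟨m, rfl⟩
  · exact absurd (G.ax5_diag k b ▸ hσ) (G.neg_α_not_mem_pos k _)
  · exact Or.inr ⟨m, (G.σ_altRoot_succ k l b m).symm⟩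
  · exact Or.inl ⟨m + 1, G.altRoot_succ_act k l b m⟩

theorem wmap_α_mem_altRoots (hN : ∀ n, n = k ∨ n = l) (w : List N) (c : A) (n : N)
    (h : G.wmap w c (G.α n c) ∈ G.pos (G.target w c)) :
    G.wmap w c (G.α n c) ∈
      Set.range (G.altRoot k l (G.target w c)) ∪ Set.range (G.altRoot l k (G.target w c)) := by
  induction w with
  | nil => rcases hN n with rfl | rfl <;> [exact Or.inl ⟨0, rfl⟩; exact Or.inr ⟨0, rfl⟩]
  | cons x w ih =>
    rcases hN x with rfl | rfl
    · exact G.σ_mem_altRoots ih h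
    · rw [Set.union_comm] at ih ⊢
      exact G.σ_mem_altRoots ih h

end GRS

theorem stmt6_general (G : GRS N A) (i j : N) (hij : i ≠ j)
    (hN : ∀ n : N, n = i ∨ n = j) (a : A) (hinf : (G.root a).Infinite) :
    (G.reroot a ∩ NSpan (Set.range fun n => G.α n a) =
      {β | ∃ m : ℕ, β = G.wmap (altList i j m) (aIter G.act i j a m)
          (G.α (if m % 2 = 0 then i else j) (aIter G.act i j a m))} ∪
      {β | ∃ m : ℕ, β = G.wmap (altList j i m) (aIter G.act j i a m)
          (G.α (if m % 2 = 0 then j else i) (aIter G.act j i a m))}) ∧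
    Function.Injective (Sum.elim
      (fun m : ℕ => G.wmap (altList i j m) (aIter G.act i j a m)
          (G.α (if m % 2 = 0 then i else j) (aIter G.act i j a m)))
      (fun m : ℕ => G.wmap (altList j i m) (aIter G.act j i a m)
          (G.α (if m % 2 = 0 then j else i) (aIter G.act j i a m)))) := by
  have hinf' := G.root_infinite hinf
  have hN' : ∀ n, n = j ∨ n = i := fun n => (hN n).symm
  refine ⟨Set.ext fun β => ⟨?_, ?_⟩, ?_⟩
  · rintro ⟨⟨c, w, n, rfl, rfl⟩, hβ⟩
    rcases G.wmap_α_mem_altRoots hN w c n ⟨G.wmap_mem_root w (G.α_mem n c), hβ⟩ with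
      ⟨m, hm⟩ | ⟨m, hm⟩
    exacts [Or.inl ⟨m, hm.symm⟩, Or.inr ⟨m, hm.symm⟩]
  · rintro (⟨m, rfl⟩ | ⟨m, rfl⟩)
    · exact ⟨⟨_, _, _, G.target_altList_aIter i j a m, rfl⟩,
        (G.altRoot_mem_pos_and_ne_α hinf' hij hN a m).1.2⟩
    · exact ⟨⟨_, _, _, G.target_altList_aIter j i a m, rfl⟩,
        (G.altRoot_mem_pos_and_ne_α hinf' hij.symm hN' a m).1.2⟩
  · exact (G.altRoot_injective hinf' hij hN a).sumElim (G.altRoot_injective hinf' hij.symm hN' a)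
      (G.altRoot_ne_altRoot_swap hinf' hij hN a)

/-- (rank two, `R_a` infinite) description of `(R^{re}_a)⁺` via the two
alternating sequences, all of whose members are pairwise distinct. -/
theorem stmt6 [Nonempty A] (G : GRS N A) (i j : N) (hij : i ≠ j)
    (hN : ∀ n : N, n = i ∨ n = j) (a : A) (hinf : (G.root a).Infinite) :
    (G.reroot a ∩ NSpan (Set.range fun n => G.α n a) =
      {β | ∃ m : ℕ, β = G.wmap (altList i j m) (aIter G.act i j a m)
          (G.α (if m % 2 = 0 then i else j) (aIter G.act i j a m))} ∪
      {β | ∃ m : ℕ, β = G.wmap (altList j i m) (aIter G.act j i a m)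
          (G.α (if m % 2 = 0 then j else i) (aIter G.act j i a m))}) ∧
    Function.Injective (Sum.elim
      (fun m : ℕ => G.wmap (altList i j m) (aIter G.act i j a m)
          (G.α (if m % 2 = 0 then i else j) (aIter G.act i j a m)))
      (fun m : ℕ => G.wmap (altList j i m) (aIter G.act j i a m)
          (G.α (if m % 2 = 0 then j else i) (aIter G.act j i a m)))) :=
  stmt6_general G i j hij hN a hinf
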